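/- Let I₁, I₂ ⊆ ℝ be nonempty open intervals and D = (1/2)(I₁+I₂). Suppose φ : D → ℝ, f₁ : I₁ → ℝ, f₂ : I₂ → ℝ satisfy φ((x+y)/2)(f₁(x) − f₂(y)) = 0 for all x ∈ I₁, y ∈ I₂, the zero set Z_φ = {u ∈ D : φ(u) = 0} is closed in D and Z_φ ≠ D. Then for every p in D with φ(p) ≠ 0, there exists λ ∈ ℝ such that f₁(x) = λ for all x ∈ (2p − I₂) ∩ I₁ and f₂(y) = λ for all y ∈ (2p − I₁) ∩ I₂. -/
import Mathlib


/-- The set `(1/2)(A + B) = {(a+b)/2 : a ∈ A, b ∈ B}`. -/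
def halfSum (A B : Set ℝ) : Set ℝ := {u | ∃ a ∈ A, ∃ b ∈ B, u = (a + b) / 2}

lemma const_of_locally_const (J : Set ℝ) (hJ : J.OrdConnected) (g : ℝ → ℝ) (ε : ℝ)
    (hε : 0 < ε) (h : ∀ x ∈ J, ∀ x' ∈ J, |x - x'| ≤ ε → g x = g x') :
    ∀ x ∈ J, ∀ x' ∈ J, g x = g x' := by
  have key : ∀ n : ℕ, ∀ x ∈ J, ∀ x' ∈ J, x ≤ x' → x' - x ≤ n * ε → g x = g x' := by
    intro n
    induction n with
    | zero =>
      intro x hx x' hx' hle hb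
      have : x = x' := by simp at hb; linarith
      rw [this]
    | succ n ih =>
      intro x hx x' hx' hle hb
      by_cases hc : x' - x ≤ n * ε
      · exact ih x hx x' hx' hle hc
      · set x'' := min (x + ε) x' with hx''def
        have h1 : x ≤ x'' := le_min (by linarith) hle
        have h2 : x'' ≤ x' := min_le_right _ _
        have hx''J : x'' ∈ J := hJ.out hx hx' ⟨h1, h2⟩
        have e1 : g x = g x'' := by
          apply h x hx x'' hx''J
          rw [abs_le]
          constructor
          · have := min_le_left (x + ε) x'; linarith
          · linarith
        have e2 : g x'' = g x' := by
          apply ih x'' hx''J x' hx' h2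
          rcases le_total (x + ε) x' with hca | hca
          · have : x'' = x + ε := min_eq_left hca
            rw [this]
            push_cast at hb
            linarith
          · have : x'' = x' := min_eq_right hca
            rw [this]
            have : (0:ℝ) ≤ n * ε := by positivity
            linarith
        rw [e1, e2]
  intro x hx x' hx'
  rcases le_total x x' with hle | hle
  · refine key ⌈(x' - x) / ε⌉₊ x hx x' hx' hle ?_
    have := Nat.le_ceil ((x' - x) / ε)
    calc x' - x = (x' - x) / ε * ε := by field_simp
    _ ≤ (⌈(x' - x) / ε⌉₊ : ℝ) * ε := by
        apply mul_le_mul_of_nonneg_right this hε.le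
  · refine (key ⌈(x - x') / ε⌉₊ x' hx' x hx hle ?_).symm
    have := Nat.le_ceil ((x - x') / ε)
    calc x - x' = (x - x') / ε * ε := by field_simp
    _ ≤ (⌈(x - x') / ε⌉₊ : ℝ) * ε := by
        apply mul_le_mul_of_nonneg_right this hε.le

theorem const_on_reflections_of_nonzero (I₁ I₂ : Set ℝ)
    (hI₁o : IsOpen I₁) (hI₁c : I₁.OrdConnected) (hI₁n : I₁.Nonempty)
    (hI₂o : IsOpen I₂) (hI₂c : I₂.OrdConnected) (hI₂n : I₂.Nonempty)
    (φ f₁ f₂ : ℝ → ℝ)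
    (heq : ∀ x ∈ I₁, ∀ y ∈ I₂, φ ((x + y) / 2) * (f₁ x - f₂ y) = 0)
    (hZclosed : closure {u ∈ halfSum I₁ I₂ | φ u = 0} ∩ halfSum I₁ I₂ ⊆
      {u ∈ halfSum I₁ I₂ | φ u = 0})
    (hZne : {u ∈ halfSum I₁ I₂ | φ u = 0} ≠ halfSum I₁ I₂)
    (p : ℝ) (hp : p ∈ halfSum I₁ I₂) (hφp : φ p ≠ 0) :
    ∃ c : ℝ, (∀ x ∈ {x | ∃ s ∈ I₂, x = 2 * p - s} ∩ I₁, f₁ x = c) ∧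
      (∀ y ∈ {y | ∃ s ∈ I₁, y = 2 * p - s} ∩ I₂, f₂ y = c) := by
  -- p is not in the closure of the zero set
  have hpZ : p ∉ closure {u ∈ halfSum I₁ I₂ | φ u = 0} := by
    intro hc
    exact hφp (hZclosed ⟨hc, hp⟩).2
  rw [Metric.mem_closure_iff] at hpZ
  push_neg at hpZ
  obtain ⟨ε, hε, hball⟩ := hpZ
  -- on D, within ε of p, φ is nonzero
  have hnz : ∀ u ∈ halfSum I₁ I₂, |u - p| < ε → φ u ≠ 0 := by
    intro u hu hdist hzero
    have := hball u ⟨hu, hzero⟩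
    rw [Real.dist_eq, abs_sub_comm] at this
    linarith
  obtain ⟨a, ha, b, hb, hpab⟩ := hp
  set J := {x | ∃ s ∈ I₂, x = 2 * p - s} ∩ I₁ with hJdef
  have hJc : J.OrdConnected := by
    constructor
    intro x hx y hy z hz
    obtain ⟨⟨sx, hsx, hxe⟩, hxI⟩ := hx
    obtain ⟨⟨sy, hsy, hye⟩, hyI⟩ := hy
    obtain ⟨hz1, hz2⟩ := hz
    refine ⟨⟨2 * p - z, hI₂c.out hsy hsx ⟨by linarith [hye ▸ hz2], by linarith [hxe ▸ hz1]⟩,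
      by ring⟩, hI₁c.out hxI hyI ⟨hz1, hz2⟩⟩
  -- local constancy of f₁ on J
  have hloc : ∀ x ∈ J, ∀ x' ∈ J, |x - x'| ≤ ε → f₁ x = f₁ x' := by
    intro x hx x' hx' hd
    obtain ⟨⟨s', hs', hx'e⟩, hx'I⟩ := hx'
    have hmidD : (x + s') / 2 ∈ halfSum I₁ I₂ := ⟨x, hx.2, s', hs', rfl⟩
    have hmidnz : φ ((x + s') / 2) ≠ 0 := by
      apply hnz _ hmidD
      have h1 : (x + s') / 2 - p = (x - x') / 2 := by rw [hx'e]; ring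
      rw [h1, abs_div]
      rw [abs_of_pos (by norm_num : (0:ℝ) < 2)]
      linarith
    have e1 : f₁ x = f₂ s' := by
      have := heq x hx.2 s' hs'
      rcases mul_eq_zero.mp this with h | h
      · exact absurd h hmidnz
      · linarith
    have e2 : f₁ x' = f₂ s' := by
      have hmp : (x' + s') / 2 = p := by rw [hx'e]; ring
      have := heq x' hx'I s' hs'
      rw [hmp] at this
      rcases mul_eq_zero.mp this with h | h
      · exact absurd h hφp
      · linarith
    rw [e1, e2]
  have hconst := const_of_locally_const J hJc f₁ ε hε hloc
  have haJ : a ∈ J := ⟨⟨b, hb, by rw [hpab]; ring⟩, ha⟩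
  refine ⟨f₁ a, fun x hx => hconst x hx a haJ, ?_⟩
  intro y hy
  obtain ⟨⟨s, hs, hye⟩, hyI⟩ := hy
  have hsJ : s ∈ J := ⟨⟨y, hyI, by rw [hye]; ring⟩, hs⟩
  have e : f₂ y = f₁ s := by
    have hmp : (s + y) / 2 = p := by rw [hye]; ring
    have := heq s hs y hyI
    rw [hmp] at this
    rcases mul_eq_zero.mp this with h | h
    · exact absurd h hφp
    · linarith
  rw [e]
  exact hconst s hsJ a haJ
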